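/- arXiv:2604.06815 — 2 statements merged into one kernel-verified Lean document; each statement's English description precedes it below -/
import Mathlib

section
/- Let E be a real Banach space, let a < b be real numbers with midpoint m = (a + b)/2, and let f : ℝ → E be three times continuously differentiable on [a, b]. Then ‖ f′(m) − (f(b) − f(a))/(b − a) ‖² ≤ ((b − a)³/320) · ∫ₐᵇ ‖ f′′′(s) ‖² ds. -/
/-!
Taylor's formula with integral remainder around the midpoint `m`, once towards `b` and once
towards `a`, makes the second-order terms cancel:
`f b - f a - (b - a) f'(m) = ∫ₐᵐ (a - t)²/2 f'''(t) dt + ∫ₘᵇ (b - t)²/2 f'''(t) dt`.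
By Cauchy–Schwarz the square of each piece is at most `((b - a)/2)⁵/20` times the matching part
of `∫ₐᵇ ‖f'''‖²`, and `(x + y)² ≤ 2 (x² + y²)` yields the constant `2 · 2⁻⁵/20 = 1/320`.
-/

open intervalIntegral Set MeasureTheory Topology

theorem ContDiffOn.hasDerivAt_iteratedDerivWithin {𝕜 F : Type*} [NontriviallyNormedField 𝕜]
    [NormedAddCommGroup F] [NormedSpace 𝕜 F] {f : 𝕜 → F} {s : Set 𝕜} {n : WithTop ℕ∞} {k : ℕ}
    (hf : ContDiffOn 𝕜 n f s) (hk : k < n) (hs : UniqueDiffOn 𝕜 s) {t : 𝕜} (ht : s ∈ 𝓝 t) :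
    HasDerivAt (iteratedDerivWithin k f s) (iteratedDerivWithin (k + 1) f s t) t := by
  rw [iteratedDerivWithin_succ, derivWithin_of_mem_nhds ht]
  exact ((hf.differentiableOn_iteratedDerivWithin hk hs).differentiableAt ht).hasDerivAt

theorem ContinuousOn.memLp_restrict_Icc {E : Type*} [NormedAddCommGroup E] {F : ℝ → E} {c d : ℝ}
    (hF : ContinuousOn F (Icc c d)) (p : ENNReal) : MemLp F p (volume.restrict (Icc c d)) := by
  obtain ⟨C, hC⟩ := isCompact_Icc.exists_bound_of_continuousOn hF
  refine .of_bound (hF.aestronglyMeasurable measurableSet_Icc) C ?_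
  filter_upwards [ae_restrict_mem measurableSet_Icc] using hC

theorem integral_sub_sq_div_two_sq (x c d : ℝ) :
    ∫ t in c..d, ((x - t) ^ 2 / 2) ^ 2 = ((x - c) ^ 5 - (x - d) ^ 5) / 20 := by
  rw [integral_comp_sub_left (fun t => (t ^ 2 / 2) ^ 2) x]
  simp only [div_pow, ← pow_mul, intervalIntegral.integral_div, integral_pow]
  ring

section

variable {E : Type*} [NormedAddCommGroup E] [NormedSpace ℝ E]

theorem norm_integral_smul_sq_le {w : ℝ → ℝ} {F : ℝ → E} {c d : ℝ} (hcd : c ≤ d)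
    (hw : ContinuousOn w (Icc c d)) (hF : ContinuousOn F (Icc c d)) :
    ‖∫ t in c..d, w t • F t‖ ^ 2 ≤ (∫ t in c..d, w t ^ 2) * ∫ t in c..d, ‖F t‖ ^ 2 := by
  simp only [integral_of_le hcd, ← integral_Icc_eq_integral_Ioc]
  have holder := integral_mul_norm_le_Lp_mul_Lq Real.HolderConjugate.two_two
    (hw.memLp_restrict_Icc _) (hF.norm.memLp_restrict_Icc _)
  simp only [Real.rpow_two, Real.norm_eq_abs, sq_abs, abs_norm, ← Real.sqrt_eq_rpow] at holder
  calc ‖∫ t in Icc c d, w t • F t‖ ^ 2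
      ≤ (√(∫ t in Icc c d, w t ^ 2) * √(∫ t in Icc c d, ‖F t‖ ^ 2)) ^ 2 := by
        gcongr
        refine (MeasureTheory.norm_integral_le_integral_norm _).trans_eq ?_ |>.trans holder
        simp only [norm_smul, Real.norm_eq_abs]
    _ = (∫ t in Icc c d, w t ^ 2) * ∫ t in Icc c d, ‖F t‖ ^ 2 := by
        rw [mul_pow, Real.sq_sqrt (integral_nonneg fun _ => sq_nonneg _),
          Real.sq_sqrt (integral_nonneg fun _ => sq_nonneg _)]

variable [CompleteSpace E] {F : ℕ → ℝ → E} {a b : ℝ}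

theorem taylor_integral_remainder_two {x₀ x : ℝ} (hx₀ : x₀ ∈ Icc a b) (hx : x ∈ Icc a b)
    (hcont : ∀ k ≤ 3, ContinuousOn (F k) (Icc a b))
    (hderiv : ∀ k < 3, ∀ t ∈ Ioo a b, HasDerivAt (F k) (F (k + 1) t) t) :
    ∫ t in x₀..x, ((x - t) ^ 2 / 2) • F 3 t =
      F 0 x - (F 0 x₀ + (x - x₀) • F 1 x₀ + ((x - x₀) ^ 2 / 2) • F 2 x₀) := by
  have hsub : uIcc x₀ x ⊆ Icc a b := uIcc_subset_Icc hx₀ hx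
  have hIoo : Ioo (min x₀ x) (max x₀ x) ⊆ Ioo a b :=
    Ioo_subset_Ioo (le_min hx₀.1 hx.1) (max_le hx₀.2 hx.2)
  have hweight : Continuous fun t => (x - t) ^ 2 / 2 := by fun_prop
  set Φ := fun t => ((x - t) ^ 2 / 2) • F 2 t + (x - t) • F 1 t + F 0 t
  have hΦ_cont : ContinuousOn Φ (uIcc x₀ x) :=
    ((hweight.continuousOn.smul (hcont 2 (by norm_num))).add
      ((continuousOn_const.sub continuousOn_id).smul (hcont 1 (by norm_num))) |>.add
      (hcont 0 (by norm_num))).mono hsub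
  have hΦ_deriv (t : ℝ) (ht : t ∈ Ioo a b) : HasDerivAt Φ (((x - t) ^ 2 / 2) • F 3 t) t := by
    have hlin := (hasDerivAt_id' t).const_sub x
    have hsq : HasDerivAt (fun t => (x - t) ^ 2 / 2) (-(x - t)) t :=
      ((hlin.pow 2).div_const 2).congr_deriv (by ring)
    have d₀ : HasDerivAt (F 0) (F 1 t) t := hderiv 0 (by norm_num) t ht
    have d₁ : HasDerivAt (F 1) (F 2 t) t := hderiv 1 (by norm_num) t ht
    have d₂ : HasDerivAt (F 2) (F 3 t) t := hderiv 2 (by norm_num) t ht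
    exact (((hsq.smul d₂).add (hlin.smul d₁)).add d₀).congr_deriv (by module)
  rw [integral_eq_sub_of_hasDeriv_right hΦ_cont
    (fun t ht => (hΦ_deriv t (hIoo ht)).hasDerivWithinAt)
    ((hweight.continuousOn.smul ((hcont 3 le_rfl).mono hsub)).intervalIntegrable)]
  simp only [Φ, sub_self, zero_pow two_ne_zero, zero_div, zero_smul, add_zero]
  abel

theorem taylor_integral_remainder_midpoint (hab : a ≤ b)
    (hcont : ∀ k ≤ 3, ContinuousOn (F k) (Icc a b))
    (hderiv : ∀ k < 3, ∀ t ∈ Ioo a b, HasDerivAt (F k) (F (k + 1) t) t) :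
    F 0 b - F 0 a - (b - a) • F 1 ((a + b) / 2) =
      (∫ t in a..(a + b) / 2, ((a - t) ^ 2 / 2) • F 3 t) +
        ∫ t in (a + b) / 2..b, ((b - t) ^ 2 / 2) • F 3 t := by
  have hm : (a + b) / 2 ∈ Icc a b := ⟨by linarith, by linarith⟩
  have ha : a ∈ Icc a b := left_mem_Icc.2 hab
  have hb : b ∈ Icc a b := right_mem_Icc.2 hab
  rw [integral_symm, taylor_integral_remainder_two hm ha hcont hderiv,
    taylor_integral_remainder_two hm hb hcont hderiv]
  match_scalars <;> ring

theorem norm_deriv_midpoint_sub_slope_sq_le (hab : a < b)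
    (hcont : ∀ k ≤ 3, ContinuousOn (F k) (Icc a b))
    (hderiv : ∀ k < 3, ∀ t ∈ Ioo a b, HasDerivAt (F k) (F (k + 1) t) t) :
    ‖F 1 ((a + b) / 2) - (b - a)⁻¹ • (F 0 b - F 0 a)‖ ^ 2 ≤
      ((b - a) ^ 3 / 320) * ∫ t in a..b, ‖F 3 t‖ ^ 2 := by
  set m := (a + b) / 2 with hm
  have ham : a ≤ m := by linarith
  have hmb : m ≤ b := by linarith
  have hF₃ := hcont 3 le_rfl
  set A := ∫ t in a..m, ((a - t) ^ 2 / 2) • F 3 t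
  set B := ∫ t in m..b, ((b - t) ^ 2 / 2) • F 3 t
  have hA : ‖A‖ ^ 2 ≤ (m - a) ^ 5 / 20 * ∫ t in a..m, ‖F 3 t‖ ^ 2 := by
    refine (norm_integral_smul_sq_le ham (by fun_prop)
      (hF₃.mono (Icc_subset_Icc_right hmb))).trans_eq ?_
    rw [integral_sub_sq_div_two_sq]
    ring
  have hB : ‖B‖ ^ 2 ≤ (b - m) ^ 5 / 20 * ∫ t in m..b, ‖F 3 t‖ ^ 2 := by
    refine (norm_integral_smul_sq_le hmb (by fun_prop)
      (hF₃.mono (Icc_subset_Icc_left ham))).trans_eq ?_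
    rw [integral_sub_sq_div_two_sq]
    ring
  have hsplit : ∫ t in a..b, ‖F 3 t‖ ^ 2 = (∫ t in a..m, ‖F 3 t‖ ^ 2) + ∫ t in m..b, ‖F 3 t‖ ^ 2 :=
    (integral_add_adjacent_intervals
      ((hF₃.norm.pow 2).mono (Icc_subset_Icc_right hmb) |>.intervalIntegrable_of_Icc ham)
      ((hF₃.norm.pow 2).mono (Icc_subset_Icc_left ham) |>.intervalIntegrable_of_Icc hmb)).symm
  have hR : F 1 m - (b - a)⁻¹ • (F 0 b - F 0 a) = -(b - a)⁻¹ • (A + B) := by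
    rw [← taylor_integral_remainder_midpoint hab.le hcont hderiv]
    match_scalars <;> field_simp [(sub_pos.2 hab).ne']
  calc ‖F 1 m - (b - a)⁻¹ • (F 0 b - F 0 a)‖ ^ 2
      = ((b - a) ^ 2)⁻¹ * ‖A + B‖ ^ 2 := by
        rw [hR, norm_smul, mul_pow, norm_neg, norm_inv, Real.norm_of_nonneg (sub_pos.2 hab).le,
          inv_pow]
    _ ≤ ((b - a) ^ 2)⁻¹ * (2 * (‖A‖ ^ 2 + ‖B‖ ^ 2)) := by
        gcongr
        exact (pow_le_pow_left₀ (norm_nonneg _) (norm_add_le A B) 2).trans add_sq_le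
    _ ≤ ((b - a) ^ 2)⁻¹ * (2 * ((m - a) ^ 5 / 20 * (∫ t in a..m, ‖F 3 t‖ ^ 2) +
          (b - m) ^ 5 / 20 * ∫ t in m..b, ‖F 3 t‖ ^ 2)) := by
        gcongr
    _ = ((b - a) ^ 3 / 320) * ∫ t in a..b, ‖F 3 t‖ ^ 2 := by
        rw [hsplit, hm]
        field_simp [(sub_pos.2 hab).ne']
        ring

end

/-- Quantitative Crank–Nicolson truncation error lemma: for `f : ℝ → E` three times
continuously differentiable on `[a, b]` with midpoint `m = (a+b)/2`,
`‖f′(m) − (f(b) − f(a))/(b − a)‖² ≤ ((b−a)³/320)·∫ₐᵇ ‖f′′′(s)‖² ds`. -/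
theorem crank_nicolson_truncation_error {E : Type*} [NormedAddCommGroup E]
    [NormedSpace ℝ E] [CompleteSpace E] (a b m : ℝ) (hab : a < b) (hm : m = (a + b) / 2)
    (f : ℝ → E) (hf : ContDiffOn ℝ 3 f (Set.Icc a b)) :
    ‖derivWithin f (Set.Icc a b) m - ((b - a)⁻¹) • (f b - f a)‖ ^ 2
      ≤ ((b - a) ^ 3 / 320) *
        ∫ s in a..b, ‖iteratedDerivWithin 3 f (Set.Icc a b) s‖ ^ 2 := by
  subst hm
  have hs : UniqueDiffOn ℝ (Icc a b) := uniqueDiffOn_Icc hab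
  simpa only [iteratedDerivWithin_zero, iteratedDerivWithin_one] using
    norm_deriv_midpoint_sub_slope_sq_le (F := fun k => iteratedDerivWithin k f (Icc a b)) hab
      (fun k hk => hf.continuousOn_iteratedDerivWithin (by exact_mod_cast hk) hs)
      (fun k hk t ht => hf.hasDerivAt_iteratedDerivWithin (by exact_mod_cast hk) hs
        (Icc_mem_nhds ht.1 ht.2))
end

section
/- Let E be a real Banach space, let a < b be real numbers with midpoint m = (a + b)/2, and let f : ℝ → E be twice continuously differentiable on [a, b]. Then ‖ (f(a) + f(b))/2 − f(m) ‖² ≤ ((b − a)³/48) · ∫ₐᵇ ‖ f′′(s) ‖² ds. -/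
/-!
Expand `f` about the midpoint `m` by Taylor's formula with integral remainder: the first-order
terms `(a - m) • f'(m)` and `(b - m) • f'(m)` cancel in the average, which leaves half the sum of
the remainders `∫ₘᵃ (a - t) • f''(t) dt` and `∫ₘᵇ (b - t) • f''(t) dt`. By Cauchy–Schwarz the
square of each is at most `((b - a) / 2)³ / 3` times `∫ ‖f''‖²` over its half of `[a, b]`, and
`‖(u + v) / 2‖² ≤ (‖u‖² + ‖v‖²) / 2` combines the two halves.
-/

open intervalIntegral MeasureTheory Set
open scoped Interval Topology

theorem integral_mul_sq_le_sq_mul_sq {α : Type*} [MeasurableSpace α] {μ : Measure α}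
    {u v : α → ℝ}
    (hu : Integrable (fun x => u x ^ 2) μ) (hv : Integrable (fun x => v x ^ 2) μ)
    (huv : Integrable (fun x => u x * v x) μ) :
    (∫ x, u x * v x ∂μ) ^ 2 ≤ (∫ x, u x ^ 2 ∂μ) * ∫ x, v x ^ 2 ∂μ := by
  have hquad : ∀ t : ℝ, 0 ≤ (∫ x, u x ^ 2 ∂μ) * (t * t) + 2 * (∫ x, u x * v x ∂μ) * t
      + ∫ x, v x ^ 2 ∂μ := fun t => by
    have hexpand : ∀ x, (t * u x + v x) ^ 2 = t * t * u x ^ 2 + 2 * t * (u x * v x) + v x ^ 2 :=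
      fun x => by ring
    calc 0 ≤ ∫ x, (t * u x + v x) ^ 2 ∂μ := integral_nonneg fun x => sq_nonneg _
      _ = _ := by
        simp_rw [hexpand]
        rw [integral_add (f := fun x => t * t * u x ^ 2 + 2 * t * (u x * v x))
          ((hu.const_mul _).add (huv.const_mul _)) hv, integral_add (hu.const_mul _)
          (huv.const_mul _), MeasureTheory.integral_const_mul,
          MeasureTheory.integral_const_mul]
        ring
  have := discrim_le_zero hquad
  rw [discrim] at this
  linarith

theorem setIntegral_uIoc_sub_sq (x y : ℝ) : ∫ t in Ι x y, (y - t) ^ 2 = |y - x| ^ 3 / 3 := by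
  have hnonneg : 0 ≤ ∫ t in Ι x y, (y - t) ^ 2 :=
    setIntegral_nonneg measurableSet_uIoc fun t _ => sq_nonneg _
  rw [← abs_of_nonneg hnonneg, ← abs_integral_eq_abs_integral_uIoc,
    integral_comp_sub_left fun t => t ^ 2, sub_self, integral_pow, abs_div, abs_sub_comm]
  norm_num

section

variable {E : Type*} [NormedAddCommGroup E] [NormedSpace ℝ E]

theorem sq_norm_integral_smul_le {x y : ℝ} {w : ℝ → ℝ} {g : ℝ → E}
    (hw : ContinuousOn w (uIcc x y)) (hg : ContinuousOn g (uIcc x y)) :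
    ‖∫ t in x..y, w t • g t‖ ^ 2 ≤ (∫ t in Ι x y, w t ^ 2) * ∫ t in Ι x y, ‖g t‖ ^ 2 := by
  have hint {h : ℝ → ℝ} (hh : ContinuousOn h (uIcc x y)) : IntegrableOn h (Ι x y) :=
    (hh.integrableOn_compact isCompact_uIcc).mono_set uIoc_subset_uIcc
  calc ‖∫ t in x..y, w t • g t‖ ^ 2 ≤ (∫ t in Ι x y, |w t| * ‖g t‖) ^ 2 := by
        gcongr
        simpa [norm_smul] using norm_integral_le_integral_norm_uIoc (f := fun t => w t • g t)
    _ ≤ (∫ t in Ι x y, |w t| ^ 2) * ∫ t in Ι x y, ‖g t‖ ^ 2 :=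
        integral_mul_sq_le_sq_mul_sq (hint (hw.abs.pow 2)) (hint (hg.norm.pow 2))
          (hint (hw.abs.mul hg.norm))
    _ = (∫ t in Ι x y, w t ^ 2) * ∫ t in Ι x y, ‖g t‖ ^ 2 := by simp_rw [sq_abs]

theorem norm_half_smul_add_sq_le (u v : E) :
    ‖(1 / 2 : ℝ) • (u + v)‖ ^ 2 ≤ (‖u‖ ^ 2 + ‖v‖ ^ 2) / 2 := by
  have : ‖u + v‖ ^ 2 ≤ 2 * (‖u‖ ^ 2 + ‖v‖ ^ 2) :=
    (pow_le_pow_left₀ (norm_nonneg _) (norm_add_le u v) 2).trans add_sq_le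
  rw [norm_smul, mul_pow, Real.norm_of_nonneg (by norm_num)]
  linarith

variable [CompleteSpace E]

theorem sub_sub_smul_eq_integral_of_hasDerivAt {f f' f'' : ℝ → E} {x y : ℝ}
    (hf : ContinuousOn f (uIcc x y)) (hf' : ContinuousOn f' (uIcc x y))
    (hf'' : ContinuousOn f'' (uIcc x y))
    (hderiv : ∀ t ∈ Ioo (min x y) (max x y), HasDerivAt f (f' t) t)
    (hderiv' : ∀ t ∈ Ioo (min x y) (max x y), HasDerivAt f' (f'' t) t) :
    f y - f x - (y - x) • f' x = ∫ t in x..y, (y - t) • f'' t := by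
  rw [integral_eq_sub_of_hasDeriv_right (f := fun t => f t + (y - t) • f' t)
    (f' := fun t => (y - t) • f'' t)
    (hf.add ((continuousOn_const.sub continuousOn_id).smul hf'))
    (fun t ht => ?_) ((continuousOn_const.sub continuousOn_id).smul hf'').intervalIntegrable]
  · simp only [sub_self, zero_smul, add_zero]
    abel
  · have := (hderiv t ht).add (((hasDerivAt_id t).const_sub y).smul (hderiv' t ht))
    convert this.hasDerivWithinAt using 1
    · rfl
    · simp only [id]
      module

theorem ContDiffOn.sub_sub_smul_derivWithin_eq_integral {a b : ℝ} (hab : a < b) {f : ℝ → E}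
    (hf : ContDiffOn ℝ 2 f (Icc a b)) {x y : ℝ} (hx : x ∈ Icc a b) (hy : y ∈ Icc a b) :
    f y - f x - (y - x) • derivWithin f (Icc a b) x
      = ∫ t in x..y, (y - t) • iteratedDerivWithin 2 f (Icc a b) t := by
  have hUD := uniqueDiffOn_Icc hab
  have hsub : uIcc x y ⊆ Icc a b := uIcc_subset_Icc hx hy
  have hnhds : ∀ t ∈ Ioo (min x y) (max x y), Icc a b ∈ 𝓝 t := fun t ht =>
    Icc_mem_nhds ((le_min hx.1 hy.1).trans_lt ht.1) (ht.2.trans_le (max_le hx.2 hy.2))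
  have hf' : ContDiffOn ℝ 1 (derivWithin f (Icc a b)) (Icc a b) :=
    hf.derivWithin hUD (by norm_num)
  refine sub_sub_smul_eq_integral_of_hasDerivAt (hf.continuousOn.mono hsub)
    (hf'.continuousOn.mono hsub) ((hf.continuousOn_iteratedDerivWithin le_rfl hUD).mono hsub)
    (fun t ht => ?_) (fun t ht => ?_)
  · exact ((hf.differentiableOn (by norm_num)) t (mem_of_mem_nhds (hnhds t ht)))
      |>.hasDerivWithinAt.hasDerivAt (hnhds t ht)
  · rw [iteratedDerivWithin_succ', iteratedDerivWithin_one]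
    exact ((hf'.differentiableOn one_ne_zero) t (mem_of_mem_nhds (hnhds t ht)))
      |>.hasDerivWithinAt.hasDerivAt (hnhds t ht)

theorem ContDiffOn.sq_norm_sub_sub_smul_derivWithin_le {a b : ℝ} (hab : a < b) {f : ℝ → E}
    (hf : ContDiffOn ℝ 2 f (Icc a b)) {x y : ℝ} (hx : x ∈ Icc a b) (hy : y ∈ Icc a b) :
    ‖f y - f x - (y - x) • derivWithin f (Icc a b) x‖ ^ 2
      ≤ |y - x| ^ 3 / 3 * ∫ t in Ι x y, ‖iteratedDerivWithin 2 f (Icc a b) t‖ ^ 2 := by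
  rw [hf.sub_sub_smul_derivWithin_eq_integral hab hx hy, ← setIntegral_uIoc_sub_sq]
  exact sq_norm_integral_smul_le (continuousOn_const.sub continuousOn_id)
    ((hf.continuousOn_iteratedDerivWithin le_rfl (uniqueDiffOn_Icc hab)).mono
      (uIcc_subset_Icc hx hy))

end

/-- Second-order accuracy of the midpoint-averaging step of the Crank–Nicolson scheme:
for `f : ℝ → E` twice continuously differentiable on `[a, b]` with midpoint
`m = (a+b)/2`, `‖(f(a) + f(b))/2 − f(m)‖² ≤ ((b−a)³/48)·∫ₐᵇ ‖f′′(s)‖² ds`. -/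
theorem midpoint_average_error {E : Type*} [NormedAddCommGroup E]
    [NormedSpace ℝ E] [CompleteSpace E] (a b m : ℝ) (hab : a < b) (hm : m = (a + b) / 2)
    (f : ℝ → E) (hf : ContDiffOn ℝ 2 f (Set.Icc a b)) :
    ‖(1 / 2 : ℝ) • (f a + f b) - f m‖ ^ 2
      ≤ ((b - a) ^ 3 / 48) *
        ∫ s in a..b, ‖iteratedDerivWithin 2 f (Set.Icc a b) s‖ ^ 2 := by
  have ham : a ≤ m := by linarith
  have hmb : m ≤ b := by linarith
  have hmI : m ∈ Icc a b := ⟨ham, hmb⟩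
  have hleft := hf.sq_norm_sub_sub_smul_derivWithin_le hab hmI (left_mem_Icc.2 hab.le)
  have hright := hf.sq_norm_sub_sub_smul_derivWithin_le hab hmI (right_mem_Icc.2 hab.le)
  rw [show |a - m| = (b - a) / 2 by rw [abs_of_nonpos] <;> linarith] at hleft
  rw [show |b - m| = (b - a) / 2 by rw [abs_of_nonneg] <;> linarith] at hright
  set g := fun t => ‖iteratedDerivWithin 2 f (Icc a b) t‖ ^ 2
  have hg : ContinuousOn g (Icc a b) :=
    ((hf.continuousOn_iteratedDerivWithin le_rfl (uniqueDiffOn_Icc hab)).norm).pow 2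
  have hsplit : (∫ t in Ι m a, g t) + (∫ t in Ι m b, g t) = ∫ t in a..b, g t := by
    rw [uIoc_of_ge ham, uIoc_of_le hmb, ← integral_of_le ham, ← integral_of_le hmb,
      integral_add_adjacent_intervals
        ((hg.mono (Icc_subset_Icc le_rfl hmb)).intervalIntegrable_of_Icc ham)
        ((hg.mono (Icc_subset_Icc ham le_rfl)).intervalIntegrable_of_Icc hmb)]
  calc ‖(1 / 2 : ℝ) • (f a + f b) - f m‖ ^ 2
      = ‖(1 / 2 : ℝ) • ((f a - f m - (a - m) • derivWithin f (Icc a b) m)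
          + (f b - f m - (b - m) • derivWithin f (Icc a b) m))‖ ^ 2 := by
        subst hm; congr 2; module
    _ ≤ _ := norm_half_smul_add_sq_le _ _
    _ ≤ (((b - a) / 2) ^ 3 / 3 * (∫ t in Ι m a, g t)
          + ((b - a) / 2) ^ 3 / 3 * (∫ t in Ι m b, g t)) / 2 := by gcongr
    _ = _ := by rw [← hsplit]; ring
end
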